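/- Let R > 0, 0 < β < π, k > 0, and let ε* = (R/2) min{1, 1/(sin β √(kR))}. Then for all complex s with |s| < ε*, the quantity μ(s) = √k · s sin β / √(R − s cos β + r(s)) satisfies |μ(s)| ≤ 1/√2. -/

import Mathlib

/-- The cut plane `C_{R,β} = ℂ \ {R cos β + it : |t| ≥ R sin β}`. -/
def cutPlane (R β : ℝ) : Set ℂ :=
  {s : ℂ | ∀ t : ℝ, R * Real.sin β ≤ |t| → s ≠ (R * Real.cos β : ℂ) + t * Complex.I}

/-- `r(s) = √(R² + s² − 2sR cos β)`, principal branch. -/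
noncomputable def rfun (R β : ℝ) (s : ℂ) : ℂ :=
  ((R : ℂ) ^ 2 + s ^ 2 - 2 * s * R * Real.cos β) ^ ((1 : ℂ) / 2)

/-- `μ(s) = √k · s sin β / √(R − s cos β + r(s))`, principal branches. -/
noncomputable def mufun (k R β : ℝ) (s : ℂ) : ℂ :=
  (Real.sqrt k : ℂ) * s * Real.sin β /
    (((R : ℂ) - s * Real.cos β + rfun R β s) ^ ((1 : ℂ) / 2))

/-!
Since `|μ(s)|² = k |s|² sin² β / |R - s cos β + r(s)|`, it suffices to bound the denominator
from below. The principal square root `r(s)` has nonnegative real part, so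
`|R - s cos β + r(s)| ≥ R - |s| > R / 2`, while `|s| sin β √(kR) < R / 2` gives
`2 k |s|² sin² β < R / 2`.
-/

namespace Complex

lemma re_cpow_one_half_nonneg (z : ℂ) : 0 ≤ (z ^ ((1 : ℂ) / 2)).re := by
  rcases eq_or_ne z 0 with rfl | hz
  · simp [zero_cpow]
  rw [cpow_def_of_ne_zero hz, exp_re]
  have him : (log z * ((1 : ℂ) / 2)).im = z.arg / 2 := by
    simp [mul_im, log_im, div_eq_mul_inv]
  rw [him]
  refine mul_nonneg (Real.exp_nonneg _) (Real.cos_nonneg_of_mem_Icc ⟨?_, ?_⟩)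
  · linarith [neg_pi_lt_arg z]
  · linarith [arg_le_pi z]

lemma norm_cpow_one_half (z : ℂ) : ‖z ^ ((1 : ℂ) / 2)‖ = √‖z‖ := by
  rw [show ((1 : ℂ) / 2) = ((1 / 2 : ℝ) : ℂ) by push_cast; rfl, norm_cpow_real,
    Real.sqrt_eq_rpow]

end Complex

lemma lt_and_mul_lt_of_lt_mul_min_one_inv {a c x : ℝ} (ha : 0 ≤ a) (hc : 0 ≤ c)
    (h : a < c * min 1 x⁻¹) : a < c ∧ a * x < c := by
  have hac : a < c := h.trans_le (mul_le_of_le_one_right hc (min_le_left _ _))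
  refine ⟨hac, ?_⟩
  rcases le_or_gt x 0 with hx | hx
  · nlinarith
  · have := h.trans_le (mul_le_mul_of_nonneg_left (min_le_right _ _) hc)
    rwa [← div_eq_mul_inv, lt_div_iff₀ hx] at this

lemma div_sqrt_le_inv_sqrt_two {x y : ℝ} (hx : 0 ≤ x) (hy : 0 < y) (h : 2 * x ^ 2 ≤ y) :
    x / √y ≤ 1 / √2 := by
  rw [div_le_div_iff₀ (by positivity) (by positivity), one_mul,
    Real.le_sqrt (by positivity) hy.le, mul_pow, Real.sq_sqrt zero_le_two]
  linarith

lemma sub_norm_le_re_denominator (R β : ℝ) (s : ℂ) :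
    R - ‖s‖ ≤ ((R : ℂ) - s * Real.cos β + rfun R β s).re := by
  have hcos : |s.re * Real.cos β| ≤ ‖s‖ := by
    rw [abs_mul]
    exact (mul_le_mul (Complex.abs_re_le_norm s) (Real.abs_cos_le_one β) (abs_nonneg _)
      (norm_nonneg s)).trans_eq (mul_one _)
  have hr := Complex.re_cpow_one_half_nonneg ((R : ℂ) ^ 2 + s ^ 2 - 2 * s * R * Real.cos β)
  simp only [Complex.add_re, Complex.sub_re, Complex.ofReal_re, Complex.re_mul_ofReal, rfun]
  linarith [(abs_le.mp hcos).2]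

lemma norm_mufun {k R β : ℝ} (hβ : 0 ≤ Real.sin β) (s : ℂ) :
    ‖mufun k R β s‖ = √k * ‖s‖ * Real.sin β / √‖(R : ℂ) - s * Real.cos β + rfun R β s‖ := by
  rw [mufun, norm_div, Complex.norm_cpow_one_half, norm_mul, norm_mul, Complex.norm_real,
    Complex.norm_real, Real.norm_of_nonneg (Real.sqrt_nonneg k), Real.norm_of_nonneg hβ]

theorem mu_small_near_origin (k R β : ℝ) (hk : 0 < k) (hR : 0 < R)
    (hβ0 : 0 < β) (hβπ : β < Real.pi) :
    ∀ s : ℂ, ‖s‖ < R / 2 * min 1 (1 / (Real.sin β * Real.sqrt (k * R))) →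
      ‖mufun k R β s‖ ≤ 1 / Real.sqrt 2 := by
  intro s hs
  have hsin : 0 < Real.sin β := Real.sin_pos_of_pos_of_lt_pi hβ0 hβπ
  rw [one_div] at hs
  obtain ⟨hsR, hsk⟩ := lt_and_mul_lt_of_lt_mul_min_one_inv (norm_nonneg s) (by positivity) hs
  have hden : R / 2 ≤ ‖(R : ℂ) - s * Real.cos β + rfun R β s‖ := by
    linarith [(sub_norm_le_re_denominator R β s).trans (Complex.re_le_norm _)]
  rw [norm_mufun hsin.le]
  refine div_sqrt_le_inv_sqrt_two (by positivity) (by linarith) (hden.trans' ?_)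
  have hsq : (√k * ‖s‖ * Real.sin β) ^ 2 * R < (R / 2) ^ 2 := by
    have := pow_lt_pow_left₀ hsk (by positivity) two_ne_zero
    rw [Real.sqrt_mul hk.le, mul_pow, mul_pow, mul_pow, Real.sq_sqrt hR.le] at this
    linarith
  nlinarith
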